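/- Let d, ℓ ∈ ℕ and T > 0. Let A, σ ∈ ℝ^{d×d}, B ∈ ℝ^{d×ℓ}, C ∈ ℝ^d, let R_x, G ∈ ℝ^{d×d} be symmetric, and let R_u ∈ ℝ^{ℓ×ℓ} be symmetric positive definite. Let P : [0,T] → ℝ^{d×d}, Q : [0,T] → ℝ^d, R : [0,T] → ℝ be differentiable with P(t) symmetric for every t ∈ [0,T], satisfying for all t ∈ [0,T]: P'(t) = Aᵀ P(t) + P(t) A + P(t) B R_u^{-1} Bᵀ P(t) − R_x; Q'(t) = −2 P(t) A C + Aᵀ Q(t) + P(t) B R_u^{-1} Bᵀ Q(t); R'(t) = −Tr(σ σᵀ P(t)) − Q(t)ᵀ A C + (1/4) Q(t)ᵀ B R_u^{-1} Bᵀ Q(t); together with the terminal conditions P(T) = G, Q(T) = 0, R(T) = 0. Define v : [0,T] × ℝ^d → ℝ by v(t,x) := ⟨P(t) x, x⟩ + ⟨Q(t), x⟩ + R(t). Then for all (t,x) ∈ [0,T] × ℝ^d, v satisfies the Hamilton–Jacobi–Bellman equation ∂_t v(t,x) + (1/2) Tr( σ σᵀ Hess_x v(t,x) ) + ⟨∇_x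 v(t,x), A(C − x)⟩ − (1/4) ⟨R_u^{-1} Bᵀ ∇_x v(t,x), Bᵀ ∇_x v(t,x)⟩ + ⟨R_x x, x⟩ = 0, and v(T,x) = ⟨G x, x⟩. -/

import Mathlib

/-!
For the quadratic ansatz the time derivative, gradient `(P + Pᵀ) x + Q` and Hessian `P + Pᵀ`
of `v` are explicit, so the HJB equation becomes a polynomial identity in `x`. Using the
symmetry of `P(t)` and of `R_u⁻¹`, its quadratic, linear and constant coefficients are exactly
the three Riccati equations.
-/

open Matrix

/-- The spatial gradient of `f : ℝ^d → ℝ` at `x`. -/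
noncomputable def grad' (d : ℕ) (f : (Fin d → ℝ) → ℝ) (x : Fin d → ℝ) : Fin d → ℝ :=
  fun i => fderiv ℝ f x (Pi.single i 1)

/-- The Hessian matrix of `f : ℝ^d → ℝ` at `x`. -/
noncomputable def hess' (d : ℕ) (f : (Fin d → ℝ) → ℝ) (x : Fin d → ℝ) :
    Matrix (Fin d) (Fin d) ℝ :=
  Matrix.of fun i j => fderiv ℝ (fun y => fderiv ℝ f y (Pi.single j 1)) x (Pi.single i 1)

theorem Matrix.mulVec_dotProduct {m n : Type*} [Fintype m] [Fintype n] (M : Matrix m n ℝ)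
    (u : n → ℝ) (w : m → ℝ) : M *ᵥ u ⬝ᵥ w = u ⬝ᵥ Mᵀ *ᵥ w := by
  rw [dotProduct_comm, dotProduct_transpose_mulVec]

section Calculus

variable {n E : Type*} [Fintype n] [NormedAddCommGroup E] [NormedSpace ℝ E]

theorem HasFDerivAt.dotProduct {f g : E → n → ℝ} {f' g' : E →L[ℝ] n → ℝ} {x : E}
    (hf : HasFDerivAt f f' x) (hg : HasFDerivAt g g' x) :
    HasFDerivAt (fun y => f y ⬝ᵥ g y)
      (∑ i, (f x i • (ContinuousLinearMap.proj i).comp g'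
        + g x i • (ContinuousLinearMap.proj i).comp f')) x :=
  HasFDerivAt.fun_sum fun i _ => (hasFDerivAt_pi'.1 hf i).mul (hasFDerivAt_pi'.1 hg i)

theorem fderiv_dotProduct_apply {f g : E → n → ℝ} {f' g' : E →L[ℝ] n → ℝ} {x : E}
    (hf : HasFDerivAt f f' x) (hg : HasFDerivAt g g' x) (h : E) :
    fderiv ℝ (fun y => f y ⬝ᵥ g y) x h = f' h ⬝ᵥ g x + f x ⬝ᵥ g' h := by
  rw [(hf.dotProduct hg).fderiv]
  simp only [Finset.sum_add_distrib, _root_.add_apply, _root_.sum_apply, _root_.smul_apply,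
    ContinuousLinearMap.comp_apply, ContinuousLinearMap.proj_apply, smul_eq_mul, dotProduct, mul_comm,
    add_comm]

theorem Matrix.hasFDerivAt_mulVec {m : Type*} [Fintype m] (M : Matrix m n ℝ) (x : n → ℝ) :
    HasFDerivAt (fun y => M *ᵥ y) (LinearMap.toContinuousLinearMap M.mulVecLin) x :=
  (LinearMap.toContinuousLinearMap M.mulVecLin).hasFDerivAt

theorem fderiv_quadratic_apply (M : Matrix n n ℝ) (q : n → ℝ) (c : ℝ) (x h : n → ℝ) :
    fderiv ℝ (fun y => M *ᵥ y ⬝ᵥ y + q ⬝ᵥ y + c) x h = ((M + Mᵀ) *ᵥ x + q) ⬝ᵥ h := by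
  have hM : HasFDerivAt (fun y => M *ᵥ y ⬝ᵥ y) _ x :=
    (M.hasFDerivAt_mulVec x).dotProduct (hasFDerivAt_id x)
  have hq : HasFDerivAt (fun y => q ⬝ᵥ y) _ x := (hasFDerivAt_const q x).dotProduct (hasFDerivAt_id x)
  rw [fderiv_add_const, fderiv_fun_add hM.differentiableAt hq.differentiableAt,
    _root_.add_apply, fderiv_dotProduct_apply (g := fun y => y) (M.hasFDerivAt_mulVec x) (hasFDerivAt_id x),
    fderiv_dotProduct_apply (g := fun y => y) (hasFDerivAt_const q x) (hasFDerivAt_id x)]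
  simp only [LinearMap.coe_toContinuousLinearMap', mulVecLin_apply, ContinuousLinearMap.id_apply,
    _root_.zero_apply, zero_dotProduct, zero_add, add_mulVec, add_dotProduct,
    mulVec_dotProduct M h x]
  rw [dotProduct_comm h]
  ring

theorem grad'_quadratic {d : ℕ} (M : Matrix (Fin d) (Fin d) ℝ) (q : Fin d → ℝ) (c : ℝ)
    (x : Fin d → ℝ) :
    grad' d (fun y => M *ᵥ y ⬝ᵥ y + q ⬝ᵥ y + c) x = (M + Mᵀ) *ᵥ x + q := by
  funext k
  rw [grad', fderiv_quadratic_apply, dotProduct_single_one]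

theorem hess'_quadratic {d : ℕ} (M : Matrix (Fin d) (Fin d) ℝ) (q : Fin d → ℝ) (c : ℝ)
    (x : Fin d → ℝ) :
    hess' d (fun y => M *ᵥ y ⬝ᵥ y + q ⬝ᵥ y + c) x = M + Mᵀ := by
  ext i j
  simp only [hess', of_apply, fderiv_quadratic_apply]
  rw [fderiv_dotProduct_apply (((M + Mᵀ).hasFDerivAt_mulVec x).add_const q) (hasFDerivAt_const _ x)]
  simp only [LinearMap.coe_toContinuousLinearMap', mulVecLin_apply, _root_.zero_apply,
    dotProduct_zero, add_zero, dotProduct_single_one, mulVec_single_one, col_apply, Matrix.add_apply,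
    transpose_apply, add_comm]

end Calculus

section TimeDerivative

variable {m n : Type*} [Fintype n] {t : ℝ}

theorem hasDerivAt_dotProduct_const {q : ℝ → n → ℝ} {q' : n → ℝ}
    (hq : ∀ i, HasDerivAt (fun s => q s i) (q' i) t) (x : n → ℝ) :
    HasDerivAt (fun s => q s ⬝ᵥ x) (q' ⬝ᵥ x) t :=
  HasDerivAt.fun_sum fun i _ => (hq i).mul_const (x i)

theorem hasDerivAt_mulVec_dotProduct [Fintype m] {M : ℝ → Matrix m n ℝ} {M' : Matrix m n ℝ}
    (hM : ∀ i j, HasDerivAt (fun s => M s i j) (M' i j) t) (x : n → ℝ) (y : m → ℝ) :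
    HasDerivAt (fun s => M s *ᵥ x ⬝ᵥ y) (M' *ᵥ x ⬝ᵥ y) t :=
  hasDerivAt_dotProduct_const (fun i => hasDerivAt_dotProduct_const (hM i) x) y

end TimeDerivative

section Algebra

variable {m n : Type*} [Fintype m] [Fintype n]

theorem riccati_hjb_residual_eq_zero (A σ P Rx : Matrix n n ℝ) (B : Matrix n m ℝ)
    (N : Matrix m m ℝ) (C Q x : n → ℝ) (hP : P.IsSymm) (hN : N.IsSymm) :
    ((Aᵀ * P + P * A + P * B * N * Bᵀ * P - Rx) *ᵥ x ⬝ᵥ x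
        + (-((2 : ℝ) • P *ᵥ A *ᵥ C) + Aᵀ *ᵥ Q + (P * B * N * Bᵀ) *ᵥ Q) ⬝ᵥ x
        + (-trace (σ * σᵀ * P) - Q ⬝ᵥ A *ᵥ C + 1 / 4 * (Q ⬝ᵥ (B * N * Bᵀ) *ᵥ Q)))
      + 1 / 2 * trace (σ * σᵀ * (P + Pᵀ))
      + ((P + Pᵀ) *ᵥ x + Q) ⬝ᵥ A *ᵥ (C - x)
      - 1 / 4 * (N *ᵥ Bᵀ *ᵥ ((P + Pᵀ) *ᵥ x + Q) ⬝ᵥ Bᵀ *ᵥ ((P + Pᵀ) *ᵥ x + Q))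
      + Rx *ᵥ x ⬝ᵥ x = 0 := by
  rw [hP.eq, ← two_smul ℝ P]
  simp only [add_mulVec, sub_mulVec, mulVec_add, mulVec_sub, smul_mulVec, ← mulVec_mulVec,
    add_dotProduct, sub_dotProduct, neg_dotProduct, smul_dotProduct, dotProduct_add,
    dotProduct_sub, dotProduct_smul, mul_smul_comm, trace_smul, smul_eq_mul, mulVec_smul]
  set p := P *ᵥ x
  set u := Bᵀ *ᵥ p
  set w := Bᵀ *ᵥ Q
  have hAtP : Aᵀ *ᵥ p ⬝ᵥ x = p ⬝ᵥ A *ᵥ x := by rw [mulVec_dotProduct, transpose_transpose]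
  have hPA : P *ᵥ A *ᵥ x ⬝ᵥ x = p ⬝ᵥ A *ᵥ x := by
    rw [mulVec_dotProduct, hP.eq, dotProduct_comm]
  have hPKP : P *ᵥ B *ᵥ N *ᵥ u ⬝ᵥ x = N *ᵥ u ⬝ᵥ u := by
    rw [mulVec_dotProduct, hP.eq, mulVec_dotProduct]
  have hPAC : P *ᵥ A *ᵥ C ⬝ᵥ x = p ⬝ᵥ A *ᵥ C := by
    rw [mulVec_dotProduct, hP.eq, dotProduct_comm]
  have hAtQ : Aᵀ *ᵥ Q ⬝ᵥ x = Q ⬝ᵥ A *ᵥ x := by rw [mulVec_dotProduct, transpose_transpose]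
  have hPKQ : P *ᵥ B *ᵥ N *ᵥ w ⬝ᵥ x = N *ᵥ w ⬝ᵥ u := by
    rw [mulVec_dotProduct, hP.eq, mulVec_dotProduct]
  have hQKQ : Q ⬝ᵥ B *ᵥ N *ᵥ w = N *ᵥ w ⬝ᵥ w := by rw [dotProduct_comm, mulVec_dotProduct]
  have hcross : N *ᵥ u ⬝ᵥ w = N *ᵥ w ⬝ᵥ u := by rw [mulVec_dotProduct, hN.eq, dotProduct_comm]
  rw [hAtP, hPA, hPKP, hPAC, hAtQ, hPKQ, hQKQ, hcross]
  ring

end Algebra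

theorem riccati_solves_LQG_HJB_general
    (d ℓ : ℕ) (T : ℝ)
    (A σ : Matrix (Fin d) (Fin d) ℝ) (B : Matrix (Fin d) (Fin ℓ) ℝ) (C : Fin d → ℝ)
    (Rx G : Matrix (Fin d) (Fin d) ℝ)
    (Ru : Matrix (Fin ℓ) (Fin ℓ) ℝ) (hRu : Ru.PosDef)
    (P : ℝ → Matrix (Fin d) (Fin d) ℝ) (Q : ℝ → Fin d → ℝ) (R : ℝ → ℝ)
    (hPsymm : ∀ t ∈ Set.Icc (0 : ℝ) T, (P t).IsSymm)
    (hP : ∀ t ∈ Set.Icc (0 : ℝ) T, ∀ i j, HasDerivAt (fun s => P s i j)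
      ((Aᵀ * P t + P t * A + P t * B * Ru⁻¹ * Bᵀ * P t - Rx) i j) t)
    (hQ : ∀ t ∈ Set.Icc (0 : ℝ) T, ∀ i, HasDerivAt (fun s => Q s i)
      ((-((2 : ℝ) • (P t).mulVec (A.mulVec C)) + Aᵀ.mulVec (Q t)
        + (P t * B * Ru⁻¹ * Bᵀ).mulVec (Q t)) i) t)
    (hR : ∀ t ∈ Set.Icc (0 : ℝ) T, HasDerivAt R
      (-Matrix.trace (σ * σᵀ * P t) - Q t ⬝ᵥ A.mulVec C
        + 1 / 4 * (Q t ⬝ᵥ (B * Ru⁻¹ * Bᵀ).mulVec (Q t))) t)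
    (hPT : P T = G) (hQT : Q T = 0) (hRT : R T = 0)
    (v : ℝ → (Fin d → ℝ) → ℝ)
    (hv : v = fun t x => (P t).mulVec x ⬝ᵥ x + Q t ⬝ᵥ x + R t) :
    (∀ t ∈ Set.Icc (0 : ℝ) T, ∀ x : Fin d → ℝ,
      deriv (fun s => v s x) t
          + 1 / 2 * Matrix.trace (σ * σᵀ * hess' d (v t) x)
          + grad' d (v t) x ⬝ᵥ A.mulVec (C - x)
          - 1 / 4 * (Ru⁻¹.mulVec (Bᵀ.mulVec (grad' d (v t) x))
              ⬝ᵥ Bᵀ.mulVec (grad' d (v t) x))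
          + Rx.mulVec x ⬝ᵥ x = 0) ∧
    (∀ x : Fin d → ℝ, v T x = G.mulVec x ⬝ᵥ x) := by
  subst hv
  refine ⟨fun t ht x => ?_, fun x => by simp [hPT, hQT, hRT]⟩
  have hv_time : HasDerivAt (fun s => P s *ᵥ x ⬝ᵥ x + Q s ⬝ᵥ x + R s) _ t :=
    ((hasDerivAt_mulVec_dotProduct (hP t ht) x x).add
      (hasDerivAt_dotProduct_const (hQ t ht) x)).add (hR t ht)
  rw [hv_time.deriv, grad'_quadratic, hess'_quadratic]
  exact riccati_hjb_residual_eq_zero A σ (P t) Rx B Ru⁻¹ C (Q t) x (hPsymm t ht)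
    (isHermitian_iff_isSymm.1 hRu.isHermitian.inv)

/-- If `(P, Q, R)` solve the Riccati system with terminal data `(G, 0, 0)`, then
`v(t,x) = ⟨P(t)x, x⟩ + ⟨Q(t), x⟩ + R(t)` solves the HJB equation of the LQG control
problem and satisfies the terminal condition `v(T,x) = ⟨Gx, x⟩`. -/
theorem riccati_solves_LQG_HJB
    (d ℓ : ℕ) (T : ℝ) (hT : 0 < T)
    (A σ : Matrix (Fin d) (Fin d) ℝ) (B : Matrix (Fin d) (Fin ℓ) ℝ) (C : Fin d → ℝ)
    (Rx G : Matrix (Fin d) (Fin d) ℝ) (hRx : Rx.IsSymm) (hG : G.IsSymm)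
    (Ru : Matrix (Fin ℓ) (Fin ℓ) ℝ) (hRu : Ru.PosDef)
    (P : ℝ → Matrix (Fin d) (Fin d) ℝ) (Q : ℝ → Fin d → ℝ) (R : ℝ → ℝ)
    (hPsymm : ∀ t ∈ Set.Icc (0 : ℝ) T, (P t).IsSymm)
    (hP : ∀ t ∈ Set.Icc (0 : ℝ) T, ∀ i j, HasDerivAt (fun s => P s i j)
      ((Aᵀ * P t + P t * A + P t * B * Ru⁻¹ * Bᵀ * P t - Rx) i j) t)
    (hQ : ∀ t ∈ Set.Icc (0 : ℝ) T, ∀ i, HasDerivAt (fun s => Q s i)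
      ((-((2 : ℝ) • (P t).mulVec (A.mulVec C)) + Aᵀ.mulVec (Q t)
        + (P t * B * Ru⁻¹ * Bᵀ).mulVec (Q t)) i) t)
    (hR : ∀ t ∈ Set.Icc (0 : ℝ) T, HasDerivAt R
      (-Matrix.trace (σ * σᵀ * P t) - Q t ⬝ᵥ A.mulVec C
        + 1 / 4 * (Q t ⬝ᵥ (B * Ru⁻¹ * Bᵀ).mulVec (Q t))) t)
    (hPT : P T = G) (hQT : Q T = 0) (hRT : R T = 0)
    (v : ℝ → (Fin d → ℝ) → ℝ)
    (hv : v = fun t x => (P t).mulVec x ⬝ᵥ x + Q t ⬝ᵥ x + R t) :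
    (∀ t ∈ Set.Icc (0 : ℝ) T, ∀ x : Fin d → ℝ,
      deriv (fun s => v s x) t
          + 1 / 2 * Matrix.trace (σ * σᵀ * hess' d (v t) x)
          + grad' d (v t) x ⬝ᵥ A.mulVec (C - x)
          - 1 / 4 * (Ru⁻¹.mulVec (Bᵀ.mulVec (grad' d (v t) x))
              ⬝ᵥ Bᵀ.mulVec (grad' d (v t) x))
          + Rx.mulVec x ⬝ᵥ x = 0) ∧
    (∀ x : Fin d → ℝ, v T x = G.mulVec x ⬝ᵥ x) :=
  riccati_solves_LQG_HJB_general d ℓ T A σ B C Rx G Ru hRu P Q R hPsymm hP hQ hR hPT hQT hRT v hv
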